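/- The rational charge assignment $Q = (\tfrac{274}{135}, \tfrac{139}{135}, -\tfrac{131}{135})$, $u = (\tfrac{364}{135}, \tfrac{94}{135}, -\tfrac{176}{135})$, $d = (-\tfrac{64}{45}, -\tfrac{109}{45}, -\tfrac{109}{45})$, $L = (-\tfrac{232}{135}, -\tfrac{307}{135}, -\tfrac{307}{135})$, $e = (\tfrac{449}{135}, -\tfrac{16}{135}, -\tfrac{151}{135})$, $\nu = (1, 0, 0)$, $H_1 = -\tfrac{863}{135}$, $H_2 = \tfrac{307}{135}$ satisfies every equation of the seesaw 2HDM system (†). -/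

import Mathlib

/-- The seesaw 2HDM system (†): anomaly conditions (with the cubic and gravitational
anomalies assumed to vanish by SM-neutral fermion content), no kinetic mixing, and the
Froggatt-Nielsen phenomenological constraints including the seesaw neutrino sector. -/
def SystemDagger (Q u d L e ν : Fin 3 → ℚ) (H₁ H₂ : ℚ) : Prop :=
  (∑ j, (Q j ^ 2 - 2 * u j ^ 2 + d j ^ 2 - L j ^ 2 + e j ^ 2)) = 0 ∧
  (∑ j, (Q j + 8 * u j + 2 * d j + 3 * L j + 6 * e j)) = 0 ∧
  (∑ j, (2 * Q j + u j + d j)) = 0 ∧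
  (∑ j, (3 * Q j + L j)) = 0 ∧
  (∑ j, (2 * Q j - 4 * u j + 2 * d j - 2 * L j + 2 * e j)) = 0 ∧
  Q 2 + u 2 + H₂ = 0 ∧ Q 1 + u 1 + H₂ = 4 ∧ Q 0 + u 0 + H₂ = 7 ∧
  Q 2 + d 2 - H₁ = 3 ∧ Q 1 + d 1 - H₁ = 5 ∧ Q 0 + d 0 - H₁ = 7 ∧
  L 2 + e 2 - H₁ = 3 ∧ L 1 + e 1 - H₁ = 4 ∧ L 0 + e 0 - H₁ = 8 ∧
  Q 0 - Q 1 = 1 ∧ Q 1 - Q 2 = 2 ∧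
  L 1 - L 2 = 0 ∧ L 1 + ν 1 + H₂ = 0 ∧
  ν 0 = 1 ∧ ν 1 = 0 ∧ ν 2 = 0

/-- The explicit rational charge assignment of Section 5 satisfies every equation of
the seesaw 2HDM system (†). -/
theorem charges_satisfy_systemDagger :
    SystemDagger ![274/135, 139/135, -131/135] ![364/135, 94/135, -176/135]
      ![-64/45, -109/45, -109/45] ![-232/135, -307/135, -307/135]
      ![449/135, -16/135, -151/135] ![1, 0, 0] (-863/135) (307/135) := by
  simp only [SystemDagger, Fin.sum_univ_three, Matrix.cons_val]
  norm_num
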